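/- For every duplicative forest f there exist an integer d ≥ 0 and a Mockingbird term u with r_d ≼ u such that the poset D*(f) (ordered by ≪) is order-isomorphic to the poset {s : u ≼ s} (ordered by ≼). In other words, every poset D*(f) is isomorphic to a maximal interval of a Mockingbird lattice M(d). -/

import Mathlib

/-- Mockingbird terms: the constant `M`, variables `x i`, and applications. -/
inductive MTerm : Type
  | M : MTerm
  | var : ℕ → MTerm
  | app : MTerm → MTerm → MTerm
  deriving DecidableEq

/-- The one-step rewrite relation `⇒` on Mockingbird terms. -/
inductive Step : MTerm → MTerm → Prop
  | mock (t : MTerm) : Step (MTerm.app MTerm.M t) (MTerm.app t t)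
  | left {t1 t1' : MTerm} (t2 : MTerm) :
      Step t1 t1' → Step (MTerm.app t1 t2) (MTerm.app t1' t2)
  | right (t1 : MTerm) {t2 t2' : MTerm} :
      Step t2 t2' → Step (MTerm.app t1 t2) (MTerm.app t1 t2')

/-- `≼`, the reflexive-transitive closure of `⇒`. -/
def MLe : MTerm → MTerm → Prop := Relation.ReflTransGen Step

/-- `≡`, the reflexive-symmetric-transitive closure of `⇒`. -/
def MEquiv : MTerm → MTerm → Prop := Relation.EqvGen Step

/-- Strict version of `≼`. -/
def MLt (s t : MTerm) : Prop := MLe s t ∧ s ≠ t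

/-- Covering relation for `≼`. -/
def MCovBy (s t : MTerm) : Prop := MLt s t ∧ ∀ z, MLt s z → ¬ MLt z t

/-- Duplicative trees: white or black nodes with a list (forest) of children. -/
inductive DTree : Type
  | W : List DTree → DTree
  | B : List DTree → DTree

/-- The one-step relation `⋖` on duplicative forests. -/
inductive DStep : List DTree → List DTree → Prop
  | dup (g : List DTree) : DStep [DTree.W g] [DTree.B (g ++ g)]
  | white {g g' : List DTree} : DStep g g' → DStep [DTree.W g] [DTree.W g']
  | black {g g' : List DTree} : DStep g g' → DStep [DTree.B g] [DTree.B g']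
  | head {t t' : DTree} (f : List DTree) : DStep [t] [t'] → DStep (t :: f) (t' :: f)
  | tail (t : DTree) {f f' : List DTree} : DStep f f' → DStep (t :: f) (t :: f')

/-- `≪`, the reflexive-transitive closure of `⋖`. -/
def DLe : List DTree → List DTree → Prop := Relation.ReflTransGen DStep

/-- The map `fr` from Mockingbird terms to duplicative forests. -/
def fr : MTerm → List DTree
  | MTerm.M => []
  | MTerm.var _ => []
  | MTerm.app MTerm.M MTerm.M => [DTree.B []]
  | MTerm.app MTerm.M t' => [DTree.W (fr t')]
  | MTerm.app t t' => [DTree.B (fr t ++ fr t')]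

mutual
  /-- The pruning map on duplicative trees (returns a forest). -/
  def prT : DTree → List DTree
    | DTree.W g => [DTree.W (prF g)]
    | DTree.B g => prF g
  /-- The pruning map on duplicative forests. -/
  def prF : List DTree → List DTree
    | [] => []
    | t :: f => prT t ++ prF f
end

mutual
  /-- The statistic `mtStat` on duplicative trees. -/
  def mtStat : DTree → ℕ
    | DTree.W g => 2 * ml g
    | DTree.B g => ml g
  /-- Sum of `mtStat` over the trees of a forest. -/
  def mtsum : List DTree → ℕ
    | [] => 0
    | t :: f => mtStat t + mtsum f
  /-- The statistic `ml` on duplicative forests: `1 - ℓ + Σ mtStat`. -/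
  def ml : List DTree → ℕ
    | f => mtsum f + 1 - f.length
end

mutual
  /-- Number of white nodes in a duplicative tree. -/
  def whitesT : DTree → ℕ
    | DTree.W g => 1 + whitesF g
    | DTree.B g => whitesF g
  /-- Number of white nodes in a duplicative forest. -/
  def whitesF : List DTree → ℕ
    | [] => 0
    | t :: f => whitesT t + whitesF f
end

/-- Closed terms: no variables. -/
def MClosed : MTerm → Prop
  | MTerm.M => True
  | MTerm.var _ => False
  | MTerm.app a b => MClosed a ∧ MClosed b

/-- Degree: number of applications. -/
def deg : MTerm → ℕ
  | MTerm.M => 0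
  | MTerm.var _ => 0
  | MTerm.app a b => deg a + deg b + 1

/-- Subterm relation. -/
inductive Subterm : MTerm → MTerm → Prop
  | refl (t : MTerm) : Subterm t t
  | left {s a : MTerm} (b : MTerm) : Subterm s a → Subterm s (MTerm.app a b)
  | right (a : MTerm) {s b : MTerm} : Subterm s b → Subterm s (MTerm.app a b)

/-- The term `r_d`. -/
def rTerm : ℕ → MTerm
  | 0 => MTerm.M
  | d + 1 => MTerm.app MTerm.M (rTerm d)

/-- Saturated chain from `a` to `b`, given as the list of its elements. -/
def SatChain (a b : MTerm) (c : List MTerm) : Prop :=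
  List.Chain' MCovBy c ∧ c.head? = some a ∧ c.getLast? = some b


/-!
Induction on the forest: every `D*(f)` is realized as the upward set of an application term `u`
with `r_d ≼ u`. Above an application `a ⋆ b` whose head `a` is itself an application, the terms
are exactly the `a' ⋆ b'` with `a ≼ a'` and `b ≼ b'`, just as the forests above `p ++ q` are the
`p' ++ q'`; so concatenation is realized by application, and a black root `B h` changes nothing.
A white root `W g` is realized by `M ⋆ Y`, where `Y` realizes `g`: above `M ⋆ Y` lie the terms
`M ⋆ Y'` (before `M` fires) and the `a ⋆ b` with `a, b` above a common `Y' ≽ Y` (after `M` fired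
on `Y'`), exactly as above `[W g]` lie the `[W g']` and the `[B (a ++ b)]` with `a, b` above a
common `g' ≽ g` (after `W g'` became `B (g' ++ g')`). Since `selfApp d` rewrites only to itself,
passing from `u` to `u ⋆ selfApp d` raises the depth `d` without changing the upward set, so two
realizations can be brought to a common depth before they are combined.
-/

open Relation

namespace MTerm

def IsApp : MTerm → Prop
  | app _ _ => True
  | _ => False

def selfApp : ℕ → MTerm
  | 0 => M
  | j + 1 => app (selfApp j) (selfApp j)

theorem not_isApp_M : ¬ M.IsApp := id

end MTerm

open MTerm

section Mockingbird

variable {a a' b b' s Y : MTerm}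

theorem Step.isApp_left (h : Step a b) : a.IsApp := by
  cases h <;> trivial

theorem Step.isApp_right (h : Step a b) : b.IsApp := by
  cases h <;> trivial

theorem MLe.isApp (ha : a.IsApp) (h : MLe a b) : b.IsApp := by
  induction h with
  | refl => exact ha
  | tail _ hs _ => exact hs.isApp_right

theorem MLe.app_left (b : MTerm) (h : MLe a a') : MLe (app a b) (app a' b) :=
  ReflTransGen.lift (app · b) (fun _ _ => Step.left b) _ _ h

theorem MLe.app_right (a : MTerm) (h : MLe b b') : MLe (app a b) (app a b') :=
  ReflTransGen.lift (app a) (fun _ _ => Step.right a) _ _ h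

theorem MLe.app_congr (ha : MLe a a') (hb : MLe b b') : MLe (app a b) (app a' b') :=
  ReflTransGen.trans (ha.app_left b) (hb.app_right a')

theorem MLe.app_cases (ha : a.IsApp) (h : MLe (app a b) s) :
    ∃ a' b', s = app a' b' ∧ MLe a a' ∧ MLe b b' := by
  induction h with
  | refl => exact ⟨a, b, rfl, .refl, .refl⟩
  | tail _ hs ih =>
    obtain ⟨a', b', rfl, ha', hb'⟩ := ih
    cases hs with
    | mock => exact absurd (ha'.isApp ha) not_isApp_M
    | left _ hs => exact ⟨_, b', rfl, ha'.tail hs, hb'⟩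
    | right _ hs => exact ⟨a', _, rfl, ha', hb'.tail hs⟩

theorem app_mle_app_iff (ha : a.IsApp) :
    MLe (app a b) (app a' b') ↔ MLe a a' ∧ MLe b b' := by
  refine ⟨fun h => ?_, fun h => h.1.app_congr h.2⟩
  obtain ⟨_, _, he, h⟩ := h.app_cases ha
  cases he
  exact h

theorem not_app_mle_mock (ha : a.IsApp) : ¬ MLe (app a b) (app M Y) := by
  intro h
  obtain ⟨_, _, he, h, -⟩ := h.app_cases ha
  cases he
  exact not_isApp_M (h.isApp ha)

theorem MLe.mock_cases (hY : Y.IsApp) (h : MLe (app M Y) s) :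
    (∃ Y', s = app M Y' ∧ MLe Y Y') ∨
      ∃ Y' a b, s = app a b ∧ MLe Y Y' ∧ MLe Y' a ∧ MLe Y' b := by
  induction h with
  | refl => exact .inl ⟨Y, rfl, .refl⟩
  | tail _ hs ih =>
    rcases ih with ⟨Y', rfl, hY'⟩ | ⟨Y', a, b, rfl, hY', ha, hb⟩
    · cases hs with
      | mock => exact .inr ⟨Y', Y', Y', rfl, hY', .refl, .refl⟩
      | left _ hs => exact absurd hs.isApp_left not_isApp_M
      | right _ hs => exact .inl ⟨_, rfl, hY'.tail hs⟩
    · cases hs with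
      | mock => exact absurd (ha.isApp (hY'.isApp hY)) not_isApp_M
      | left _ hs => exact .inr ⟨Y', _, b, rfl, hY', ha.tail hs, hb⟩
      | right _ hs => exact .inr ⟨Y', a, _, rfl, hY', ha, hb.tail hs⟩

theorem mock_mle_mock_iff (hY : Y.IsApp) : MLe (app M Y) (app M a) ↔ MLe Y a := by
  refine ⟨fun h => ?_, MLe.app_right M⟩
  rcases h.mock_cases hY with ⟨_, he, h⟩ | ⟨Y', _, _, he, hYY', hY'a, -⟩
  · cases he
    exact h
  · cases he
    exact absurd (hY'a.isApp (hYY'.isApp hY)) not_isApp_M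

theorem mock_mle_app_iff (hY : Y.IsApp) (ha : a.IsApp) :
    MLe (app M Y) (app a b) ↔ ∃ Y', MLe Y Y' ∧ MLe Y' a ∧ MLe Y' b := by
  constructor
  · intro h
    rcases h.mock_cases hY with ⟨_, he, -⟩ | ⟨Y', _, _, he, h⟩
    · cases he
      exact absurd ha not_isApp_M
    · cases he
      exact ⟨Y', h⟩
  · rintro ⟨Y', hYY', hY'a, hY'b⟩
    exact ReflTransGen.trans (hYY'.app_right M)
      (ReflTransGen.head (Step.mock Y') (hY'a.app_congr hY'b))

theorem Step.eq_selfApp : ∀ {j : ℕ} {s : MTerm}, Step (selfApp j) s → s = selfApp j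
  | 0, _, h => absurd h.isApp_left not_isApp_M
  | 1, _, .mock _ => rfl
  | 1, _, .left _ h | 1, _, .right _ h => absurd h.isApp_left not_isApp_M
  | _ + 2, _, .left _ h => by rw [h.eq_selfApp]; rfl
  | _ + 2, _, .right _ h => by rw [h.eq_selfApp]; rfl

theorem MLe.eq_selfApp {j : ℕ} (h : MLe (selfApp j) s) : s = selfApp j := by
  induction h with
  | refl => rfl
  | tail _ hs ih =>
    subst ih
    exact hs.eq_selfApp

theorem rTerm_mle_selfApp (j : ℕ) : MLe (rTerm j) (selfApp j) := by
  induction j with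
  | zero => exact .refl
  | succ j ih => exact ReflTransGen.head (Step.mock _) (ih.app_congr ih)

end Mockingbird

open DTree

section Forest

variable {p p' q q' z g g' h h' : List DTree} {t : DTree}

theorem DStep.length_eq (hs : DStep p q) : p.length = q.length := by
  induction hs <;> simp_all

theorem DLe.length_eq (hle : DLe p q) : p.length = q.length := by
  induction hle with
  | refl => rfl
  | tail _ hs ih => exact ih.trans hs.length_eq

theorem DLe.length_eq_length (hp : DLe g p) (hq : DLe g q) : p.length = q.length :=
  hp.length_eq.symm.trans hq.length_eq

theorem DLe.eq_nil (hle : DLe [] p) : p = [] :=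
  List.eq_nil_of_length_eq_zero hle.length_eq.symm

theorem DStep.append_right (q : List DTree) (hs : DStep p p') : DStep (p ++ q) (p' ++ q) := by
  induction hs with
  | dup g => exact .head q (.dup g)
  | white hs => exact .head q (.white hs)
  | black hs => exact .head q (.black hs)
  | head f hs => exact .head (f ++ q) hs
  | tail t _ ih => exact .tail t ih

theorem DStep.append_left (p : List DTree) (hs : DStep q q') : DStep (p ++ q) (p ++ q') := by
  induction p with
  | nil => exact hs
  | cons t p ih => exact .tail t ih

theorem DLe.append (hp : DLe p p') (hq : DLe q q') : DLe (p ++ q) (p' ++ q') :=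
  ReflTransGen.trans (ReflTransGen.lift (· ++ q) (fun _ _ => DStep.append_right q) _ _ hp)
    (ReflTransGen.lift (p' ++ ·) (fun _ _ => DStep.append_left p') _ _ hq)

theorem DLe.white (hg : DLe g g') : DLe [W g] [W g'] :=
  ReflTransGen.lift (fun g => [W g]) (fun _ _ => DStep.white) _ _ hg

theorem DLe.black (hh : DLe h h') : DLe [B h] [B h'] :=
  ReflTransGen.lift (fun h => [B h]) (fun _ _ => DStep.black) _ _ hh

theorem DStep.cons_cases (hs : DStep (t :: p) z) :
    (∃ t', z = t' :: p ∧ DStep [t] [t']) ∨ ∃ p', z = t :: p' ∧ DStep p p' := by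
  cases hs with
  | dup g => exact .inl ⟨_, rfl, .dup g⟩
  | white hs => exact .inl ⟨_, rfl, .white hs⟩
  | black hs => exact .inl ⟨_, rfl, .black hs⟩
  | head _ hs => exact .inl ⟨_, rfl, hs⟩
  | tail _ hs => exact .inr ⟨_, rfl, hs⟩

theorem DStep.append_cases (hs : DStep (p ++ q) z) :
    (∃ p', z = p' ++ q ∧ DStep p p') ∨ ∃ q', z = p ++ q' ∧ DStep q q' := by
  induction p generalizing z with
  | nil => exact .inr ⟨z, rfl, hs⟩
  | cons t p ih =>
    rcases DStep.cons_cases hs with ⟨t', rfl, ht⟩ | ⟨_, rfl, hpq⟩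
    · exact .inl ⟨t' :: p, rfl, .head p ht⟩
    · rcases ih hpq with ⟨p', rfl, hp⟩ | ⟨q', rfl, hq⟩
      · exact .inl ⟨t :: p', rfl, .tail t hp⟩
      · exact .inr ⟨q', rfl, hq⟩

theorem DLe.append_cases (hle : DLe (p ++ q) z) :
    ∃ p' q', z = p' ++ q' ∧ DLe p p' ∧ DLe q q' := by
  induction hle with
  | refl => exact ⟨p, q, rfl, .refl, .refl⟩
  | tail _ hs ih =>
    obtain ⟨p', q', rfl, hp, hq⟩ := ih
    rcases hs.append_cases with ⟨_, rfl, hsp⟩ | ⟨_, rfl, hsq⟩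
    · exact ⟨_, q', rfl, hp.tail hsp, hq⟩
    · exact ⟨p', _, rfl, hp, hq.tail hsq⟩

theorem append_dle_append_iff (hl : p.length = p'.length) :
    DLe (p ++ q) (p' ++ q') ↔ DLe p p' ∧ DLe q q' := by
  refine ⟨fun hle => ?_, fun hle => hle.1.append hle.2⟩
  obtain ⟨_, _, he, hp, hq⟩ := hle.append_cases
  obtain ⟨rfl, rfl⟩ := List.append_inj he (hl.symm.trans hp.length_eq)
  exact ⟨hp, hq⟩

theorem DStep.singleton_cases (hs : DStep [t] z) :
    (∃ g, t = W g ∧ z = [B (g ++ g)]) ∨ (∃ g g', t = W g ∧ z = [W g'] ∧ DStep g g') ∨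
      ∃ h h', t = B h ∧ z = [B h'] ∧ DStep h h' := by
  generalize hx : [t] = x at hs
  induction hs generalizing t with
  | dup g => cases hx; exact .inl ⟨g, rfl, rfl⟩
  | white hs => cases hx; exact .inr (.inl ⟨_, _, rfl, rfl, hs⟩)
  | black hs => cases hx; exact .inr (.inr ⟨_, _, rfl, rfl, hs⟩)
  | head _ _ ih => cases hx; exact ih rfl
  | tail _ hs => cases hx; nomatch hs

theorem DLe.black_cases (hle : DLe [B h] z) : ∃ h', z = [B h'] ∧ DLe h h' := by
  induction hle with
  | refl => exact ⟨h, rfl, .refl⟩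
  | tail _ hs ih =>
    obtain ⟨h', rfl, hh'⟩ := ih
    rcases hs.singleton_cases with ⟨_, he, -⟩ | ⟨_, _, he, -⟩ | ⟨_, _, he, rfl, hs⟩ <;> cases he
    exact ⟨_, rfl, hh'.tail hs⟩

theorem DLe.white_cases (hle : DLe [W g] z) :
    (∃ g', z = [W g'] ∧ DLe g g') ∨ ∃ g' h, z = [B h] ∧ DLe g g' ∧ DLe (g' ++ g') h := by
  induction hle with
  | refl => exact .inl ⟨g, rfl, .refl⟩
  | tail _ hs ih =>
    rcases ih with ⟨g', rfl, hg'⟩ | ⟨g', h, rfl, hg', hh⟩ <;>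
      rcases hs.singleton_cases with ⟨_, he, rfl⟩ | ⟨_, _, he, rfl, hs⟩ | ⟨_, _, he, rfl, hs⟩ <;>
      cases he
    · exact .inr ⟨g', _, rfl, hg', .refl⟩
    · exact .inl ⟨_, rfl, hg'.tail hs⟩
    · exact .inr ⟨g', _, rfl, hg', hh.tail hs⟩

theorem black_dle_black_iff : DLe [B h] [B h'] ↔ DLe h h' := by
  refine ⟨fun hle => ?_, DLe.black⟩
  obtain ⟨_, he, hh'⟩ := hle.black_cases
  cases he
  exact hh'

theorem not_black_dle_white : ¬ DLe [B h] [W g] := by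
  intro hle
  obtain ⟨_, he, -⟩ := hle.black_cases
  cases he

theorem white_dle_white_iff : DLe [W g] [W g'] ↔ DLe g g' := by
  refine ⟨fun hle => ?_, DLe.white⟩
  rcases hle.white_cases with ⟨_, he, hg'⟩ | ⟨_, _, he, -⟩ <;> cases he
  exact hg'

theorem white_dle_black_iff : DLe [W g] [B h] ↔ ∃ g', DLe g g' ∧ DLe (g' ++ g') h := by
  constructor
  · intro hle
    rcases hle.white_cases with ⟨_, he, -⟩ | ⟨g', _, he, hg'⟩ <;> cases he
    exact ⟨g', hg'⟩
  · rintro ⟨g', hg', hh⟩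
    exact ReflTransGen.trans hg'.white (ReflTransGen.head (DStep.dup g') hh.black)

end Forest

section RelIsos

variable {α β γ δ : Type*} {r : α → α → Prop} {s : β → β → Prop}

theorem Prod.rProd_iff {x y : α × β} :
    RProd r s x y ↔ r x.1 y.1 ∧ s x.2 y.2 :=
  ⟨fun ⟨hr, hs⟩ => ⟨hr, hs⟩, fun ⟨hr, hs⟩ => ⟨hr, hs⟩⟩

def RelIso.rProdCongr {r₁ : α → α → Prop} {s₁ : β → β → Prop} {r₂ : γ → γ → Prop}
    {s₂ : δ → δ → Prop} (e₁ : r₁ ≃r s₁) (e₂ : r₂ ≃r s₂) : Prod.RProd r₁ r₂ ≃r Prod.RProd s₁ s₂ where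
  toEquiv := e₁.toEquiv.prodCongr e₂.toEquiv
  map_rel_iff' := by
    simp only [Prod.rProd_iff]
    exact and_congr e₁.map_rel_iff e₂.map_rel_iff

/-- The order on the upward set of `[W g]` in terms of the order `r` on the upward set of `g`:
`inl x` stands for `[W x]` and `inr (a, b)` for `[B (a ++ b)]`. -/
def DupRel (r : α → α → Prop) : α ⊕ α × α → α ⊕ α × α → Prop
  | .inl x, .inl y => r x y
  | .inl x, .inr y => ∃ z, r x z ∧ r z y.1 ∧ r z y.2
  | .inr _, .inl _ => False
  | .inr x, .inr y => Prod.RProd r r x y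

def RelIso.dupRelCongr (e : r ≃r s) : DupRel r ≃r DupRel s where
  toEquiv := e.toEquiv.sumCongr (e.toEquiv.prodCongr e.toEquiv)
  map_rel_iff' := by
    rintro (x | ⟨x₁, x₂⟩) (y | ⟨y₁, y₂⟩)
    · exact e.map_rel_iff
    · exact e.surjective.exists.trans
        (exists_congr fun z => and_congr e.map_rel_iff (and_congr e.map_rel_iff e.map_rel_iff))
    · exact Iff.rfl
    · simp only [DupRel, Prod.rProd_iff]
      exact and_congr e.map_rel_iff e.map_rel_iff

end RelIsos

section UpwardSets

variable {u Y : MTerm}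

noncomputable def appendUpIso (p q : List DTree) :
    Prod.RProd (Subrel DLe (DLe p)) (Subrel DLe (DLe q)) ≃r Subrel DLe (DLe (p ++ q)) where
  toEquiv := Equiv.ofBijective (fun x => ⟨x.1.1 ++ x.2.1, x.1.2.append x.2.2⟩) <| by
    refine ⟨?_, ?_⟩
    · rintro ⟨⟨a, ha⟩, ⟨b, _⟩⟩ ⟨⟨c, hc⟩, ⟨d, _⟩⟩ he
      obtain ⟨rfl, rfl⟩ := List.append_inj (congrArg Subtype.val he)
        (ha.length_eq_length hc)
      rfl
    · rintro ⟨z, hz⟩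
      obtain ⟨a, b, rfl, ha, hb⟩ := hz.append_cases
      exact ⟨(⟨a, ha⟩, ⟨b, hb⟩), rfl⟩
  map_rel_iff' {x y} := by
    simp only [Prod.rProd_iff]
    exact append_dle_append_iff (x.1.2.length_eq_length y.1.2)

noncomputable def blackUpIso (h : List DTree) :
    Subrel DLe (DLe h) ≃r Subrel DLe (DLe [B h]) where
  toEquiv := Equiv.ofBijective (fun x => ⟨[B x.1], x.2.black⟩) <| by
    refine ⟨?_, ?_⟩
    · rintro ⟨a, _⟩ ⟨b, _⟩ he
      simp_all
    · rintro ⟨z, hz⟩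
      obtain ⟨h', rfl, hh'⟩ := hz.black_cases
      exact ⟨⟨h', hh'⟩, rfl⟩
  map_rel_iff' := black_dle_black_iff

noncomputable def whiteUpIso (g : List DTree) :
    DupRel (Subrel DLe (DLe g)) ≃r Subrel DLe (DLe [W g]) where
  toEquiv := Equiv.ofBijective
    (Sum.elim (fun x => ⟨[W x.1], x.2.white⟩)
      (fun x => ⟨[B (x.1.1 ++ x.2.1)], white_dle_black_iff.2 ⟨g, .refl, x.1.2.append x.2.2⟩⟩)) <| by
    refine ⟨?_, ?_⟩
    · rintro (⟨a, _⟩ | ⟨⟨a, ha⟩, ⟨b, _⟩⟩) (⟨c, _⟩ | ⟨⟨c, hc⟩, ⟨d, _⟩⟩) he <;>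
        simp only [Sum.elim_inl, Sum.elim_inr, Subtype.mk.injEq, List.cons.injEq, W.injEq,
          B.injEq, reduceCtorEq, and_true] at he
      · subst he
        rfl
      · obtain ⟨rfl, rfl⟩ := List.append_inj he (ha.length_eq_length hc)
        rfl
    · rintro ⟨z, hz⟩
      rcases hz.white_cases with ⟨g', rfl, hg'⟩ | ⟨g', h, rfl, hg', hh⟩
      · exact ⟨.inl ⟨g', hg'⟩, rfl⟩
      · obtain ⟨a, b, rfl, ha, hb⟩ := hh.append_cases
        exact ⟨.inr (⟨a, ReflTransGen.trans hg' ha⟩, ⟨b, ReflTransGen.trans hg' hb⟩), rfl⟩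
  map_rel_iff' := by
    rintro (x | ⟨a, b⟩) (y | ⟨c, d⟩)
    · exact white_dle_white_iff
    · refine white_dle_black_iff.trans ⟨fun ⟨g', hxg', hg'⟩ => ?_, fun ⟨z, hxz, hza, hzb⟩ => ?_⟩
      · have hg : DLe g g' := ReflTransGen.trans x.2 hxg'
        exact ⟨⟨g', hg⟩, hxg', (append_dle_append_iff (hg.length_eq_length c.2)).1 hg'⟩
      · exact ⟨z.1, hxz, hza.append hzb⟩
    · exact iff_of_false not_black_dle_white id
    · simp only [DupRel, Prod.rProd_iff]
      exact black_dle_black_iff.trans (append_dle_append_iff (a.2.length_eq_length c.2))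

noncomputable def appUpIso (hu : u.IsApp) (v : MTerm) :
    Prod.RProd (Subrel MLe (MLe u)) (Subrel MLe (MLe v)) ≃r Subrel MLe (MLe (app u v)) where
  toEquiv := Equiv.ofBijective (fun x => ⟨app x.1.1 x.2.1, x.1.2.app_congr x.2.2⟩) <| by
    refine ⟨?_, ?_⟩
    · rintro ⟨⟨a, _⟩, ⟨b, _⟩⟩ ⟨⟨c, _⟩, ⟨d, _⟩⟩ he
      simp_all
    · rintro ⟨s, hs⟩
      obtain ⟨a, b, rfl, ha, hb⟩ := hs.app_cases hu
      exact ⟨(⟨a, ha⟩, ⟨b, hb⟩), rfl⟩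
  map_rel_iff' {x _} := by
    simp only [Prod.rProd_iff]
    exact app_mle_app_iff (x.1.2.isApp hu)

noncomputable def mockUpIso (hY : Y.IsApp) :
    DupRel (Subrel MLe (MLe Y)) ≃r Subrel MLe (MLe (app M Y)) where
  toEquiv := Equiv.ofBijective
    (Sum.elim (fun x => ⟨app M x.1, x.2.app_right M⟩)
      (fun x => ⟨app x.1.1 x.2.1,
        (mock_mle_app_iff hY (x.1.2.isApp hY)).2 ⟨Y, .refl, x.1.2, x.2.2⟩⟩)) <| by
    refine ⟨?_, ?_⟩
    · rintro (⟨a, _⟩ | ⟨⟨a, ha⟩, ⟨b, _⟩⟩) (⟨c, _⟩ | ⟨⟨c, hc⟩, ⟨d, _⟩⟩) he <;>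
        simp only [Sum.elim_inl, Sum.elim_inr, Subtype.mk.injEq, app.injEq, true_and] at he
      · subst he
        rfl
      · exact absurd (he.1 ▸ hc.isApp hY) not_isApp_M
      · exact absurd (he.1 ▸ ha.isApp hY) not_isApp_M
      · obtain ⟨rfl, rfl⟩ := he
        rfl
    · rintro ⟨s, hs⟩
      rcases hs.mock_cases hY with ⟨Y', rfl, hY'⟩ | ⟨Y', a, b, rfl, hY', ha, hb⟩
      · exact ⟨.inl ⟨Y', hY'⟩, rfl⟩
      · exact ⟨.inr (⟨a, ReflTransGen.trans hY' ha⟩, ⟨b, ReflTransGen.trans hY' hb⟩), rfl⟩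
  map_rel_iff' := by
    rintro (x | ⟨a, b⟩) (y | ⟨c, d⟩)
    · exact mock_mle_mock_iff (x.2.isApp hY)
    · refine (mock_mle_app_iff (x.2.isApp hY) (c.2.isApp hY)).trans
        ⟨fun ⟨Y', hxY', hY'c, hY'd⟩ => ⟨⟨Y', ReflTransGen.trans x.2 hxY'⟩, hxY', hY'c, hY'd⟩,
          fun ⟨z, hxz, hzc, hzd⟩ => ⟨z.1, hxz, hzc, hzd⟩⟩
    · exact iff_of_false (not_app_mle_mock (a.2.isApp hY)) id
    · simp only [DupRel, Prod.rProd_iff]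
      exact app_mle_app_iff (a.2.isApp hY)

noncomputable def selfAppUpIso (hu : u.IsApp) (j : ℕ) :
    Subrel MLe (MLe u) ≃r Subrel MLe (MLe (app u (selfApp j))) where
  toEquiv := Equiv.ofBijective (fun x => ⟨app x.1 (selfApp j), x.2.app_left _⟩) <| by
    refine ⟨?_, ?_⟩
    · rintro ⟨a, _⟩ ⟨b, _⟩ he
      simp_all
    · rintro ⟨s, hs⟩
      obtain ⟨a, b, rfl, ha, hb⟩ := hs.app_cases hu
      obtain rfl := hb.eq_selfApp
      exact ⟨⟨a, ha⟩, rfl⟩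
  map_rel_iff' {x _} := (app_mle_app_iff (x.2.isApp hu)).trans (and_iff_left .refl)

noncomputable def nilUpIso : Subrel DLe (DLe []) ≃r Subrel MLe (MLe (selfApp 1)) where
  toFun _ := ⟨selfApp 1, .refl⟩
  invFun _ := ⟨[], .refl⟩
  left_inv x := Subtype.ext x.2.eq_nil.symm
  right_inv s := Subtype.ext s.2.eq_selfApp.symm
  map_rel_iff' {x y} := iff_of_true .refl <| by
    rw [subrel_val, x.2.eq_nil, y.2.eq_nil]
    exact .refl

end UpwardSets

/-- Requiring `u` to be an application keeps `M` from firing at the head of `u ⋆ v`,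
so that the upward set of `u ⋆ v` is a product. -/
def Realizes (f : List DTree) (d : ℕ) (u : MTerm) : Prop :=
  u.IsApp ∧ MLe (rTerm d) u ∧ Nonempty (Subrel DLe (DLe f) ≃r Subrel MLe (MLe u))

namespace Realizes

variable {f g : List DTree} {d d₁ d₂ : ℕ} {u v : MTerm}

theorem nil : Realizes [] 1 (selfApp 1) :=
  ⟨trivial, .refl, ⟨nilUpIso⟩⟩

theorem black (hg : Realizes g d u) : Realizes [B g] d u :=
  ⟨hg.1, hg.2.1, hg.2.2.map (blackUpIso g).symm.trans⟩

theorem white (hg : Realizes g d u) : Realizes [W g] (d + 1) (app M u) :=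
  ⟨trivial, hg.2.1.app_right M,
    hg.2.2.map fun e => (whiteUpIso g).symm.trans (e.dupRelCongr.trans (mockUpIso hg.1))⟩

theorem append (hf : Realizes f d u) (hg : Realizes g d v) :
    Realizes (f ++ g) (d + 1) (app u v) := by
  obtain ⟨hu, hdu, ⟨e₁⟩⟩ := hf
  obtain ⟨-, hdv, ⟨e₂⟩⟩ := hg
  exact ⟨trivial, ReflTransGen.head (Step.mock _) (hdu.app_congr hdv),
    ⟨(appendUpIso f g).symm.trans ((e₁.rProdCongr e₂).trans (appUpIso hu v))⟩⟩

theorem succ (hf : Realizes f d u) : Realizes f (d + 1) (app u (selfApp d)) :=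
  ⟨trivial, ReflTransGen.head (Step.mock _) (hf.2.1.app_congr (rTerm_mle_selfApp d)),
    hf.2.2.map (·.trans (selfAppUpIso hf.1 d))⟩

theorem exists_of_le (hf : Realizes f d₁ u) (hd : d₁ ≤ d₂) : ∃ u', Realizes f d₂ u' := by
  induction d₂, hd using Nat.le_induction with
  | base => exact ⟨u, hf⟩
  | succ _ _ ih =>
    obtain ⟨u', hu'⟩ := ih
    exact ⟨_, hu'.succ⟩

theorem exists_append (hf : Realizes f d₁ u) (hg : Realizes g d₂ v) :
    ∃ d w, Realizes (f ++ g) d w := by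
  obtain ⟨u', hf'⟩ := hf.exists_of_le (le_max_left d₁ d₂)
  obtain ⟨v', hg'⟩ := hg.exists_of_le (le_max_right d₁ d₂)
  exact ⟨_, _, hf'.append hg'⟩

end Realizes

theorem exists_realizes : ∀ f : List DTree, ∃ d u, Realizes f d u
  | [] => ⟨1, _, .nil⟩
  | W g :: f =>
    have ⟨_, _, hg⟩ := exists_realizes g
    have ⟨_, _, hf⟩ := exists_realizes f
    hg.white.exists_append hf
  | B g :: f =>
    have ⟨_, _, hg⟩ := exists_realizes g
    have ⟨_, _, hf⟩ := exists_realizes f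
    hg.black.exists_append hf

/-- every poset `D*(f)` is order-isomorphic to a maximal interval
`{s : u ≼ s}` of a Mockingbird lattice `M(d)`, i.e. for some `d` and some `u` with
`r_d ≼ u`. -/
theorem duplicative_poset_iso_mockingbird_interval (f : List DTree) :
    ∃ (d : ℕ) (u : MTerm), MLe (rTerm d) u ∧
      ∃ φ : {f' : List DTree // DLe f f'} ≃ {s : MTerm // MLe u s},
        ∀ a b : {f' : List DTree // DLe f f'},
          DLe a.1 b.1 ↔ MLe (φ a).1 (φ b).1 := by
  obtain ⟨d, u, -, hdu, ⟨e⟩⟩ := exists_realizes f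
  exact ⟨d, u, hdu, e.toEquiv, fun _ _ => e.map_rel_iff.symm⟩
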